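/- In algorithm AlgAU, if an edge e = (u, v) is protected at time t and {λ_u^t, λ_v^t} ≠ {-k, k}, then e is protected at time t + 1. -/
import Mathlib


set_option autoImplicit false

/-- A turn of AlgAU: able turns `Able(ℓ)` for `1 ≤ |ℓ| ≤ k` and faulty turns
`Faulty(ℓ)` for `2 ≤ |ℓ| ≤ k`. -/
inductive Turn where
  | able (ℓ : ℤ)
  | faulty (ℓ : ℤ)
deriving DecidableEq

/-- The level of a turn. -/
def Turn.level : Turn → ℤ
  | .able ℓ => ℓ
  | .faulty ℓ => ℓ

/-- Whether a turn is able. -/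
def Turn.isAble : Turn → Prop
  | .able _ => True
  | .faulty _ => False

/-- A turn belongs to the state set of AlgAU with parameter `k`. -/
def ValidTurn (k : ℤ) : Turn → Prop
  | .able ℓ => 1 ≤ |ℓ| ∧ |ℓ| ≤ k
  | .faulty ℓ => 2 ≤ |ℓ| ∧ |ℓ| ≤ k

/-- The forward operator: `φ(-1) = 1`, `φ(k) = -k`, `φ(ℓ) = ℓ + 1` otherwise. -/
def forwardOp (k : ℤ) (ℓ : ℤ) : ℤ :=
  if ℓ = -1 then 1 else if ℓ = k then -k else ℓ + 1

/-- Levels `ℓ, ℓ'` are adjacent: `ℓ' ∈ {ℓ, φ(ℓ), φ⁻¹(ℓ)}`. -/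
def adjLvl (k : ℤ) (ℓ ℓ' : ℤ) : Prop :=
  ℓ' = ℓ ∨ ℓ' = forwardOp k ℓ ∨ ℓ = forwardOp k ℓ'

/-- `ψ⁻¹(ℓ)`: the level one unit inwards of `ℓ` (same sign, absolute value decreased). -/
def inwd (ℓ : ℤ) : ℤ := if 0 < ℓ then ℓ - 1 else ℓ + 1

/-- `m` is strictly outwards of `ℓ`: same sign and strictly larger absolute value. -/
def strictOut (ℓ m : ℤ) : Prop := (0 < ℓ ∧ ℓ < m) ∨ (ℓ < 0 ∧ m < ℓ)

/-- The inclusive neighborhood `N⁺(v)`. -/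
def closedNbhd {V : Type} (G : SimpleGraph V) (v : V) : Set V := {u | u = v ∨ G.Adj u v}

/-- Node `v` is protected under configuration `c`: all incident edges have adjacent
endpoint levels. -/
def NodeProt {V : Type} (k : ℤ) (G : SimpleGraph V) (c : V → Turn) (v : V) : Prop :=
  ∀ u, G.Adj u v → adjLvl k ((c v).level) ((c u).level)

/-- Node `v` is good: protected and sensing no faulty turn. -/
def NodeGood {V : Type} (k : ℤ) (G : SimpleGraph V) (c : V → Turn) (v : V) : Prop :=
  NodeProt k G c v ∧ ∀ u ∈ closedNbhd G v, (c u).isAble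

/-- Condition for a type AA transition of `v` from `Able(ℓ)` to `Able(φ(ℓ))`:
`v` is good and all sensed levels belong to `{ℓ, φ(ℓ)}`. -/
def AAcond {V : Type} (k : ℤ) (G : SimpleGraph V) (c : V → Turn) (v : V) (ℓ : ℤ) : Prop :=
  c v = .able ℓ ∧ NodeGood k G c v ∧
    ∀ u ∈ closedNbhd G v, (c u).level = ℓ ∨ (c u).level = forwardOp k ℓ

/-- Condition for a type AF transition of `v` from `Able(ℓ)` to `Faulty(ℓ)`
(`2 ≤ |ℓ|`): `v` is not protected or senses the turn `Faulty(ψ⁻¹(ℓ))`. -/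
def AFcond {V : Type} (k : ℤ) (G : SimpleGraph V) (c : V → Turn) (v : V) (ℓ : ℤ) : Prop :=
  c v = .able ℓ ∧ 2 ≤ |ℓ| ∧
    (¬ NodeProt k G c v ∨ ∃ u ∈ closedNbhd G v, c u = .faulty (inwd ℓ))

/-- Condition for a type FA transition of `v` from `Faulty(ℓ)` to `Able(ψ⁻¹(ℓ))`:
`v` senses no level strictly outwards of `ℓ`. -/
def FAcond {V : Type} (G : SimpleGraph V) (c : V → Turn) (v : V) (ℓ : ℤ) : Prop :=
  c v = .faulty ℓ ∧ ∀ u ∈ closedNbhd G v, ¬ strictOut ℓ ((c u).level)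

/-- The new turn `q` of an activated node `v` in one step of AlgAU. -/
def StepNode {V : Type} (k : ℤ) (G : SimpleGraph V) (c : V → Turn) (v : V) (q : Turn) : Prop :=
  (∀ ℓ, AAcond k G c v ℓ → q = .able (forwardOp k ℓ)) ∧
  (∀ ℓ, AFcond k G c v ℓ → ¬ AAcond k G c v ℓ → q = .faulty ℓ) ∧
  (∀ ℓ, FAcond G c v ℓ → q = .able (inwd ℓ)) ∧
  ((∀ ℓ, ¬ AAcond k G c v ℓ ∧ ¬ AFcond k G c v ℓ ∧ ¬ FAcond G c v ℓ) → q = c v)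

/-- One asynchronous step of AlgAU with activation set `A`: activated nodes follow
the transition rules, the others keep their turns. -/
def Step {V : Type} (k : ℤ) (G : SimpleGraph V) (A : Set V) (c c' : V → Turn) : Prop :=
  ∀ v, (v ∉ A → c' v = c v) ∧ (v ∈ A → StepNode k G c v (c' v))

lemma step_cases {V : Type} (k : ℤ) (G : SimpleGraph V) (A : Set V) (c c' : V → Turn)
    (h : Step k G A c c') (v : V) :
    (c' v).level = (c v).level ∨
    (AAcond k G c v ((c v).level) ∧ (c' v).level = forwardOp k ((c v).level)) ∨
    (FAcond G c v ((c v).level) ∧ (c' v).level = inwd ((c v).level)) := by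
  obtain ⟨hout, hin⟩ := h v
  by_cases hA : v ∈ A
  · obtain ⟨hAA, hAF, hFA, hkeep⟩ := hin hA
    by_cases h1 : ∃ ℓ, AAcond k G c v ℓ
    · obtain ⟨ℓ, hℓ⟩ := h1
      have hlev : (c v).level = ℓ := by rw [hℓ.1]; rfl
      right; left
      refine ⟨by rw [hlev]; exact hℓ, ?_⟩
      rw [hAA ℓ hℓ, hlev]; rfl
    · by_cases h2 : ∃ ℓ, FAcond G c v ℓ
      · obtain ⟨ℓ, hℓ⟩ := h2
        have hlev : (c v).level = ℓ := by rw [hℓ.1]; rfl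
        right; right
        refine ⟨by rw [hlev]; exact hℓ, ?_⟩
        rw [hFA ℓ hℓ, hlev]; rfl
      · by_cases h3 : ∃ ℓ, AFcond k G c v ℓ
        · obtain ⟨ℓ, hℓ⟩ := h3
          left
          rw [hAF ℓ hℓ (fun hc => h1 ⟨ℓ, hc⟩), hℓ.1]; rfl
        · left
          rw [hkeep (fun ℓ => ⟨fun hc => h1 ⟨ℓ, hc⟩, fun hc => h3 ⟨ℓ, hc⟩,
            fun hc => h2 ⟨ℓ, hc⟩⟩)]
  · left; rw [hout hA]

lemma valid_level (k : ℤ) (q : Turn) (h : ValidTurn k q) :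
    (1 ≤ q.level ∧ q.level ≤ k) ∨ (-k ≤ q.level ∧ q.level ≤ -1) := by
  cases q with
  | able ℓ =>
    simp only [ValidTurn, Turn.level] at h ⊢
    rcases abs_cases ℓ with ⟨h1, h2⟩ | ⟨h1, h2⟩ <;> omega
  | faulty ℓ =>
    simp only [ValidTurn, Turn.level] at h ⊢
    rcases abs_cases ℓ with ⟨h1, h2⟩ | ⟨h1, h2⟩ <;> omega

lemma valid_level_faulty (k ℓ : ℤ) (q : Turn) (hq : q = .faulty ℓ) (h : ValidTurn k q) :
    2 ≤ ℓ ∨ ℓ ≤ -2 := by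
  subst hq
  simp only [ValidTurn] at h
  rcases abs_cases ℓ with ⟨h1, h2⟩ | ⟨h1, h2⟩ <;> omega

set_option maxHeartbeats 2000000 in
lemma key (k a b a' b' : ℤ) (hk2 : 2 ≤ k)
    (hva : (1 ≤ a ∧ a ≤ k) ∨ (-k ≤ a ∧ a ≤ -1))
    (hvb : (1 ≤ b ∧ b ≤ k) ∨ (-k ≤ b ∧ b ≤ -1))
    (hadj : adjLvl k a b)
    (hnk : ¬((a = -k ∧ b = k) ∨ (a = k ∧ b = -k)))
    (hcase :
      (a' = a ∧ b' = b) ∨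
      (a' = a ∧ b' = forwardOp k b ∧ (a = b ∨ a = forwardOp k b)) ∨
      (a' = a ∧ b' = inwd b ∧ (2 ≤ b ∨ b ≤ -2) ∧ ¬ strictOut b a) ∨
      (a' = forwardOp k a ∧ (b = a ∨ b = forwardOp k a) ∧ b' = b) ∨
      (a' = forwardOp k a ∧ (b = a ∨ b = forwardOp k a) ∧
        b' = forwardOp k b ∧ (a = b ∨ a = forwardOp k b)) ∨
      (a' = inwd a ∧ (2 ≤ a ∨ a ≤ -2) ∧ ¬ strictOut a b ∧ b' = b) ∨
      (a' = inwd a ∧ (2 ≤ a ∨ a ≤ -2) ∧ ¬ strictOut a b ∧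
        b' = inwd b ∧ (2 ≤ b ∨ b ≤ -2) ∧ ¬ strictOut b a)) :
    adjLvl k a' b' := by
  simp only [adjLvl, forwardOp, inwd, strictOut] at hadj hcase ⊢
  split_ifs at hadj hcase ⊢ <;> omega

/-- in AlgAU, if an edge `(u, v)` is protected at time `t` and
`{λ_u^t, λ_v^t} ≠ {-k, k}`, then the edge is protected at time `t + 1`. -/
theorem stmt_5 {V : Type} [Fintype V] (G : SimpleGraph V) (D : ℕ) (k : ℤ)
    (hk : k = 3 * D + 2)
    (σ : ℕ → V → Turn) (A : ℕ → Set V)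
    (hvalid : ∀ t v, ValidTurn k (σ t v))
    (hstep : ∀ t, Step k G (A t) (σ t) (σ (t + 1)))
    (t : ℕ) (u v : V) (huv : G.Adj u v)
    (hprot : adjLvl k ((σ t u).level) ((σ t v).level))
    (hnk : ({(σ t u).level, (σ t v).level} : Set ℤ) ≠ {-k, k}) :
    adjLvl k ((σ (t + 1) u).level) ((σ (t + 1) v).level) := by
  have hk2 : 2 ≤ k := by omega
  have hcu := step_cases k G (A t) (σ t) (σ (t + 1)) (hstep t) u
  have hcv := step_cases k G (A t) (σ t) (σ (t + 1)) (hstep t) v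
  have hva := valid_level k _ (hvalid t u)
  have hvb := valid_level k _ (hvalid t v)
  have hmemu : v ∈ closedNbhd G u := Or.inr huv.symm
  have hmemv : u ∈ closedNbhd G v := Or.inr huv
  have hnk' : ¬(((σ t u).level = -k ∧ (σ t v).level = k) ∨
      ((σ t u).level = k ∧ (σ t v).level = -k)) := by
    rintro (⟨h1, h2⟩ | ⟨h1, h2⟩) <;> apply hnk <;> rw [h1, h2]
    exact Set.pair_comm k (-k)
  apply key k ((σ t u).level) ((σ t v).level) _ _ hk2 hva hvb hprot hnk'
  rcases hcu with hu | ⟨hu, hu'⟩ | ⟨hu, hu'⟩ <;>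
    rcases hcv with hv | ⟨hv, hv'⟩ | ⟨hv, hv'⟩
  · exact Or.inl ⟨hu, hv⟩
  · exact Or.inr (Or.inl ⟨hu, hv', hv.2.2 u hmemv⟩)
  · exact Or.inr (Or.inr (Or.inl ⟨hu, hv',
      valid_level_faulty k _ _ hv.1 (hvalid t v), hv.2 u hmemv⟩))
  · exact Or.inr (Or.inr (Or.inr (Or.inl ⟨hu', hu.2.2 v hmemu, hv⟩)))
  · exact Or.inr (Or.inr (Or.inr (Or.inr (Or.inl
      ⟨hu', hu.2.2 v hmemu, hv', hv.2.2 u hmemv⟩))))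
  · -- u does AA but v is faulty: contradiction
    exfalso
    have := hu.2.1.2 v hmemu
    rw [hv.1] at this
    exact this
  · exact Or.inr (Or.inr (Or.inr (Or.inr (Or.inr (Or.inl ⟨hu',
      valid_level_faulty k _ _ hu.1 (hvalid t u), hu.2 v hmemu, hv⟩)))))
  · exfalso
    have := hv.2.1.2 u hmemv
    rw [hu.1] at this
    exact this
  · exact Or.inr (Or.inr (Or.inr (Or.inr (Or.inr (Or.inr ⟨hu',
      valid_level_faulty k _ _ hu.1 (hvalid t u), hu.2 v hmemu, hv',
      valid_level_faulty k _ _ hv.1 (hvalid t v), hv.2 u hmemv⟩)))))
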